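/- For every integer k ≥ 0, the (q,r)-Whitney numbers of the second kind have the rational generating function: in the ring of formal power series ℝ[[T]], (Σ_{n≥0} W_{m,r}[n,k]_q T^n) · ∏_{j=0}^{k} (1 − [mj+r]_q T) = q^{m·binom(k,2)+kr} · T^k. (Note that W_{m,r}[n,k]_q = 0 for n < k, so the series on the left is Σ_{n≥k} W_{m,r}[n,k]_q T^n.) -/

import Mathlib

open Finset

/-- The `q`-integer `[s]_q = (q^s - 1)/(q - 1)` for an integer `s`. -/
noncomputable def qint (q : ℝ) (s : ℤ) : ℝ := (q ^ s - 1) / (q - 1)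

/-- The `(q,r)`-Whitney numbers of the second kind `W_{m,r}[n,k]_q`, with `r : ℤ` so
that both `W_{m,r}` and `W_{m,-r}` are covered: `W[0,0] = 1`, `W[n,k] = 0` for `k > n`,
and `W[n,k] = q^(m(k-1)+r) W[n-1,k-1] + [mk+r]_q W[n-1,k]`. -/
noncomputable def qWhitney2 (q : ℝ) (m : ℕ) (r : ℤ) : ℕ → ℕ → ℝ
  | 0, 0 => 1
  | 0, _ + 1 => 0
  | n + 1, 0 => qint q r * qWhitney2 q m r n 0
  | n + 1, k + 1 =>
      q ^ (m * k + r) * qWhitney2 q m r n k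
        + qint q (m * (k + 1) + r) * qWhitney2 q m r n (k + 1)

/-! Write `F_k = ∑ₙ W[n,k] Tⁿ`. Since multiplying by `1 - a T` turns a coefficient sequence `f n`
into `f n - a f (n - 1)`, the recurrence for column `k + 1` says exactly that
`F_{k+1} (1 - [m(k+1)+r]_q T) = q^(mk+r) T F_k`, while `F_0 (1 - [r]_q T) = 1`. Multiplying these
together gives the product formula, the exponents adding up to `m·C(k,2) + kr`. -/

namespace PowerSeries

variable {R : Type*} [CommRing R]

theorem coeff_zero_mul_one_sub_C_mul_X (f : R⟦X⟧) (a : R) :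
    coeff 0 (f * (1 - C a * X)) = coeff 0 f := by
  simp [mul_sub, ← mul_assoc]

theorem coeff_succ_mul_one_sub_C_mul_X (f : R⟦X⟧) (a : R) (n : ℕ) :
    coeff (n + 1) (f * (1 - C a * X)) = coeff (n + 1) f - a * coeff n f := by
  simp [mul_sub, ← mul_assoc, coeff_succ_mul_X, coeff_mul_C, mul_comm]

end PowerSeries

open PowerSeries

noncomputable def qWhitney2Series (q : ℝ) (m : ℕ) (r : ℤ) (k : ℕ) : ℝ⟦X⟧ :=
  mk fun n => qWhitney2 q m r n k

theorem qWhitney2Series_zero_mul (q : ℝ) (m : ℕ) (r : ℤ) :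
    qWhitney2Series q m r 0 * (1 - C (qint q r) * X) = 1 := by
  ext (_ | n)
  · simp [coeff_zero_mul_one_sub_C_mul_X, qWhitney2Series, qWhitney2]
  · simp [coeff_succ_mul_one_sub_C_mul_X, qWhitney2Series, qWhitney2]

theorem qWhitney2Series_succ_mul (q : ℝ) (m : ℕ) (r : ℤ) (k : ℕ) :
    qWhitney2Series q m r (k + 1) * (1 - C (qint q (m * (k + 1 : ℕ) + r)) * X) =
      C (q ^ ((m : ℤ) * k + r)) * X * qWhitney2Series q m r k := by
  ext (_ | n)
  · simp [coeff_zero_mul_one_sub_C_mul_X, qWhitney2Series, qWhitney2]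
  · rw [coeff_succ_mul_one_sub_C_mul_X, mul_assoc, coeff_C_mul, coeff_succ_X_mul]
    simp only [qWhitney2Series, coeff_mk, qWhitney2]
    push_cast
    ring

theorem qWhitney2_rational_generating_function_general (q : ℝ) (m r : ℕ)
    (k : ℕ) :
    (PowerSeries.mk fun n => qWhitney2 q m (r : ℤ) n k) *
        ∏ j ∈ Finset.range (k + 1),
          (1 - PowerSeries.C (R := ℝ) (qint q ((m : ℤ) * j + r)) * PowerSeries.X) =
      PowerSeries.C (R := ℝ) (q ^ (m * Nat.choose k 2 + k * r)) * PowerSeries.X ^ k := by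
  change qWhitney2Series q m r k * _ = _
  induction k with
  | zero => simpa using qWhitney2Series_zero_mul q m r
  | succ k ih =>
    have hexp : m * (k + 1).choose 2 + (k + 1) * r = (m * k + r) + (m * k.choose 2 + k * r) := by
      rw [Nat.choose_succ_succ', Nat.choose_one_right]
      ring
    have hpow : q ^ ((m : ℤ) * k + r) = q ^ (m * k + r) := by
      exact_mod_cast zpow_natCast q (m * k + r)
    calc qWhitney2Series q m r (k + 1) *
          ∏ j ∈ range (k + 1 + 1), (1 - C (qint q ((m : ℤ) * j + r)) * X)
        = C (q ^ ((m : ℤ) * k + r)) * X *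
            (qWhitney2Series q m r k *
              ∏ j ∈ range (k + 1), (1 - C (qint q ((m : ℤ) * j + r)) * X)) := by
          rw [prod_range_succ, mul_left_comm, qWhitney2Series_succ_mul]
          ring
      _ = C (q ^ (m * (k + 1).choose 2 + (k + 1) * r)) * X ^ (k + 1) := by
          rw [ih, hpow, hexp, pow_add q (m * k + r), map_mul, pow_succ]
          ring

theorem qWhitney2_rational_generating_function (q : ℝ) (hq : 0 < q) (hq1 : q ≠ 1) (m r : ℕ) (hm : 0 < m) (hr : 0 < r)
    (k : ℕ) :
    (PowerSeries.mk fun n => qWhitney2 q m (r : ℤ) n k) *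
        ∏ j ∈ Finset.range (k + 1),
          (1 - PowerSeries.C (R := ℝ) (qint q ((m : ℤ) * j + r)) * PowerSeries.X) =
      PowerSeries.C (R := ℝ) (q ^ (m * Nat.choose k 2 + k * r)) * PowerSeries.X ^ k :=
  qWhitney2_rational_generating_function_general q m r k
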